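/- For a labeled open graph with I = O and a gflow, every non-output vertex is labeled YZ and the graph is of register-logic form (no edges between non-output vertices). -/
import Mathlib


/-- Measurement labels (planes of the Bloch sphere). -/
inductive MLabel | XY | XZ | YZ
deriving DecidableEq

/-- The odd neighborhood of a set `S` of vertices. -/
def oddNbhd {V : Type*} [Fintype V] [DecidableEq V] (G : SimpleGraph V)
    [DecidableRel G.Adj] (S : Finset V) : Finset V :=
  Finset.univ.filter fun v => Odd (G.neighborFinset v ∩ S).card

/-- `(g, ord)` is a gflow for the labeled open graph `(G, I, O, lam)`. -/
def IsGflow {V : Type*} [Fintype V] [DecidableEq V] (G : SimpleGraph V)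
    [DecidableRel G.Adj] (I O : Finset V) (lam : V → MLabel)
    (g : V → Finset V) (ord : V → V → Prop) : Prop :=
  (∀ a b c : V, ord a b → ord b c → ord a c) ∧
  (∀ a : V, ¬ ord a a) ∧
  ∀ u : V, u ∉ O →
    (∀ v ∈ g u, v ∉ I) ∧
    (∀ v ∈ g u, v ≠ u → ord u v) ∧
    (∀ v ∈ oddNbhd G (g u), v ≠ u → ord u v) ∧
    (lam u = MLabel.XY → u ∉ g u ∧ u ∈ oddNbhd G (g u)) ∧
    (lam u = MLabel.XZ → u ∈ g u ∧ u ∈ oddNbhd G (g u)) ∧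
    (lam u = MLabel.YZ → u ∈ g u ∧ u ∉ oddNbhd G (g u))

/-- Register-logic form: no edges between non-output vertices. -/
def RLForm {V : Type*} (G : SimpleGraph V) (O : Finset V) [DecidableEq V] : Prop :=
  ∀ v w : V, G.Adj v w → v ∈ O ∨ w ∈ O

theorem gflow_io_eq_implies_yz_rl {V : Type*} [Fintype V] [DecidableEq V]
    (G : SimpleGraph V) [DecidableRel G.Adj] (I O : Finset V) (lam : V → MLabel)
    (g : V → Finset V) (ord : V → V → Prop)
    (hIO : I = O)
    (hcomp : ∀ v : V, ∃ w ∈ I ∪ O, G.Reachable v w)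
    (hg : IsGflow G I O lam g ord) :
    (∀ u : V, u ∉ O → lam u = MLabel.YZ) ∧ RLForm G O := by
  obtain ⟨htrans, hirr, hflow⟩ := hg
  have hwf : WellFounded (fun a b => ord b a) := by
    haveI : IsTrans V (fun a b => ord b a) := ⟨fun a b c h1 h2 => htrans c b a h2 h1⟩
    haveI : IsIrrefl V (fun a b => ord b a) := ⟨fun a => hirr a⟩
    exact Finite.wellFounded_of_trans_of_irrefl _
  have key : ∀ u : V, u ∉ O → lam u = MLabel.YZ ∧ ∀ w, G.Adj u w → w ∈ O := by
    intro u
    induction u using hwf.induction with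
    | _ u IH =>
    intro hu
    obtain ⟨hgI, hord, hoddord, hXY, hXZ, hYZ⟩ := hflow u hu
    have hmem : ∀ v ∈ g u, v ≠ u → (v ∉ O ∧ ∀ w, G.Adj v w → w ∈ O) := by
      intro v hv hne
      have hvO : v ∉ O := hIO ▸ hgI v hv
      exact ⟨hvO, (IH v (hord v hv hne) hvO).2⟩
    have hnotodd : u ∉ oddNbhd G (g u) := by
      have hempty : G.neighborFinset u ∩ g u = ∅ := by
        ext v
        simp only [Finset.mem_inter, SimpleGraph.mem_neighborFinset,
          Finset.notMem_empty, iff_false, not_and]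
        intro hadj hvg
        have hne : v ≠ u := fun h => G.irrefl (h ▸ hadj)
        exact hu ((hmem v hvg hne).2 u hadj.symm)
      simp [oddNbhd, hempty]
    have hlam : lam u = MLabel.YZ := by
      cases h : lam u with
      | XY => exact absurd (hXY h).2 hnotodd
      | XZ => exact absurd (hXZ h).2 hnotodd
      | YZ => rfl
    refine ⟨hlam, fun w hadj => ?_⟩
    by_contra hwO
    have hug : u ∈ g u := (hYZ hlam).1
    have hwodd : w ∈ oddNbhd G (g u) := by
      have hsingle : G.neighborFinset w ∩ g u = {u} := by
        ext v
        simp only [Finset.mem_inter, SimpleGraph.mem_neighborFinset, Finset.mem_singleton]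
        constructor
        · rintro ⟨hadj', hvg⟩
          by_contra hne
          exact hwO ((hmem v hvg hne).2 w hadj'.symm)
        · rintro rfl; exact ⟨hadj.symm, hug⟩
      simp [oddNbhd, hsingle]
    have hwu : w ≠ u := fun h => G.irrefl (h ▸ hadj)
    exact hu ((IH w (hoddord w hwodd hwu) hwO).2 u hadj.symm)
  exact ⟨fun u hu => (key u hu).1, fun v w hadj => by
    by_cases hv : v ∈ O
    · exact Or.inl hv
    · exact Or.inr ((key v hv).2 w hadj)⟩
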